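/- arXiv:1911.02668 — 2 statements merged into one kernel-verified Lean document; each statement's English description precedes it below -/
import Mathlib

section
/- Variable-binding compliance of maximal admissible canonical answers: for every SUJO query q, every graph G, every set B ⊆ U and every solution mapping ω ∈ mCanAns(q,G,B), we have dom(ω) ∈ adm(q). -/
open Classical

noncomputable section

namespace SPARQL

/-- A solution mapping: a partial function from variables `V` to the universe `U`. -/
abbrev SolMap (V U : Type*) := V → Option U

namespace SolMap

variable {V U : Type*}

/-- dom(ω) -/
def dom (ω : SolMap V U) : Set V := {x | ω x ≠ none}

/-- range(ω) -/
def ran (ω : SolMap V U) : Set U := {u | ∃ x, ω x = some u}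

/-- ω1 ∼ ω2 (compatibility) -/
def Compatible (ω1 ω2 : SolMap V U) : Prop :=
  ∀ x a b, ω1 x = some a → ω2 x = some b → a = b

/-- ω1 ∪ ω2 (for compatible mappings, their common extension) -/
def union (ω1 ω2 : SolMap V U) : SolMap V U :=
  fun x => (ω1 x).orElse (fun _ => ω2 x)

/-- ω|_X : restriction of ω to the variable set X -/
def restrict (ω : SolMap V U) (X : Set V) : SolMap V U :=
  fun x => if x ∈ X then ω x else none

/-- ω‖_B : restriction of ω to the variables mapped into B -/
def restrictRan (ω : SolMap V U) (B : Set U) : SolMap V U :=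
  fun x => (ω x).bind (fun u => if u ∈ B then some u else none)

/-- ω1 ≼ ω2 (ω2 extends ω1) -/
def prec (ω1 ω2 : SolMap V U) : Prop :=
  dom ω1 ⊆ dom ω2 ∧ Compatible ω1 ω2

end SolMap

variable {V U C R : Type*}

/-- Ω1 ⋈ Ω2 -/
def Join (Ω1 Ω2 : Set (SolMap V U)) : Set (SolMap V U) :=
  {ω | ∃ ω1 ∈ Ω1, ∃ ω2 ∈ Ω2, SolMap.Compatible ω1 ω2 ∧ ω = SolMap.union ω1 ω2}

/-- Ω1 ∖ Ω2 -/
def Diff (Ω1 Ω2 : Set (SolMap V U)) : Set (SolMap V U) :=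
  {ω | ω ∈ Ω1 ∧ ∀ ω2 ∈ Ω2, ¬ SolMap.Compatible ω ω2}

/-- π_X Ω -/
def Proj (X : Set V) (Ω : Set (SolMap V U)) : Set (SolMap V U) :=
  {ω | ∃ ω' ∈ Ω, ω = SolMap.restrict ω' X}

/-- Ω ▷ B -/
def RangeIn (Ω : Set (SolMap V U)) (B : Set U) : Set (SolMap V U) :=
  {ω | ω ∈ Ω ∧ SolMap.ran ω ⊆ B}

/-- Ω ▶ B -/
def RangeRestrict (Ω : Set (SolMap V U)) (B : Set U) : Set (SolMap V U) :=
  {ω | ∃ ω' ∈ Ω, ω = SolMap.restrictRan ω' B}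

/-- Ω ⊗ 𝒳 : restrictions of members of Ω to ⊆-maximal admissible subsets of their domains -/
def MaxAdm (Ω : Set (SolMap V U)) (𝒳 : Set (Set V)) : Set (SolMap V U) :=
  {ω | ∃ ω' ∈ Ω, ∃ X ∈ 𝒳, X ⊆ SolMap.dom ω' ∧
    (∀ Y ∈ 𝒳, Y ⊆ SolMap.dom ω' → X ⊆ Y → Y = X) ∧ ω = SolMap.restrict ω' X}

/-- Ω1 ≼_g Ω2 -/
def PrecG (Ω1 Ω2 : Set (SolMap V U)) : Prop :=
  ∀ ω1 ∈ Ω1, ∃ ω2 ∈ Ω2, SolMap.prec ω1 ω2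

/-- Atoms: A(u) for a concept name A, or r(u1,u2) for a role name r. -/
inductive Atom (U C R : Type*) where
  | concept (A : C) (u : U)
  | role (r : R) (u1 u2 : U)

/-- A graph is a set of atoms. -/
abbrev Graph (U C R : Type*) := Set (Atom U C R)

/-- aDom(G): the elements of U occurring in the atoms of G. -/
def Graph.aDom (G : Graph U C R) : Set U :=
  {u | (∃ A, Atom.concept A u ∈ G) ∨ (∃ r w, Atom.role r u w ∈ G) ∨
       (∃ r w, Atom.role r w u ∈ G)}

/-- An ABox: a finite graph whose atoms only use individuals (elements of NI). -/
def Graph.IsABox (NI : Set U) (G : Graph U C R) : Prop :=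
  G.Finite ∧ ∀ a ∈ G,
    match a with
    | Atom.concept _ u => u ∈ NI
    | Atom.role _ u1 u2 => u1 ∈ NI ∧ u2 ∈ NI

/-- Constant-preserving homomorphism from G to I. -/
def IsHom (NI : Set U) (h : U → U) (G I : Graph U C R) : Prop :=
  (∀ c ∈ NI, h c = c) ∧
  (∀ (A : C) (u : U), Atom.concept A u ∈ G → Atom.concept A (h u) ∈ I) ∧
  (∀ (r : R) (u1 u2 : U), Atom.role r u1 u2 ∈ G → Atom.role r (h u1) (h u2) ∈ I)

/-- Terms of triple patterns: variables or individuals (elements of NI ⊆ U). -/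
inductive Term (V U : Type*) (NI : Set U) where
  | var (v : V)
  | cst (c : NI)

def Term.vars {NI : Set U} : Term V U NI → Set V
  | .var v => {v}
  | .cst _ => ∅

def Term.app {NI : Set U} : Term V U NI → SolMap V U → Option U
  | .var v, ω => ω v
  | .cst c, _ => some c.1

/-- Triple patterns. -/
inductive Pattern (V U C R : Type*) (NI : Set U) where
  | concept (A : C) (t : Term V U NI)
  | role (r : R) (t1 t2 : Term V U NI)

def Pattern.vars {NI : Set U} : Pattern V U C R NI → Set V
  | .concept _ t => t.vars
  | .role _ t1 t2 => t1.vars ∪ t2.vars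

/-- ω(t): the atom obtained by applying ω to the triple pattern t (if defined). -/
def Pattern.app {NI : Set U} : Pattern V U C R NI → SolMap V U → Option (Atom U C R)
  | .concept A t, ω => (t.app ω).map (Atom.concept A)
  | .role r t1 t2, ω => (t1.app ω).bind fun u1 => (t2.app ω).map fun u2 => Atom.role r u1 u2

/-- SUJO queries. -/
inductive Query (V U C R : Type*) (NI : Set U) where
  | pat (t : Pattern V U C R NI)
  | select (X : Set V) (q : Query V U C R NI)
  | qunion (q1 q2 : Query V U C R NI)
  | qjoin (q1 q2 : Query V U C R NI)
  | qopt (q1 q2 : Query V U C R NI)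

variable {NI : Set U}

def Query.vars : Query V U C R NI → Set V
  | .pat t => t.vars
  | .select X _ => X
  | .qunion q1 q2 => q1.vars ∪ q2.vars
  | .qjoin q1 q2 => q1.vars ∪ q2.vars
  | .qopt q1 q2 => q1.vars ∪ q2.vars

/-- Well-formedness: SELECT_X q requires X ⊆ vars(q) (part of the grammar). -/
def Query.WF : Query V U C R NI → Prop
  | .pat _ => True
  | .select X q => X ⊆ q.vars ∧ q.WF
  | .qunion q1 q2 => q1.WF ∧ q2.WF
  | .qjoin q1 q2 => q1.WF ∧ q2.WF
  | .qopt q1 q2 => q1.WF ∧ q2.WF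

/-- sparqlAns(q,G) -/
def ans : Query V U C R NI → Graph U C R → Set (SolMap V U)
  | .pat t, G => {ω | SolMap.dom ω = t.vars ∧ ∃ a ∈ G, t.app ω = some a}
  | .select X q, G => Proj X (ans q G)
  | .qunion q1 q2, G => ans q1 G ∪ ans q2 G
  | .qjoin q1 q2, G => Join (ans q1 G) (ans q2 G)
  | .qopt q1 q2, G => Join (ans q1 G) (ans q2 G) ∪ Diff (ans q1 G) (ans q2 G)

/-- adm(q): admissible sets of variables. -/
def adm : Query V U C R NI → Set (Set V)
  | .pat t => {t.vars}
  | .select X q => {Y | ∃ X' ∈ adm q, Y = X' ∩ X}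
  | .qunion q1 q2 => adm q1 ∪ adm q2
  | .qjoin q1 q2 => {Y | ∃ X1 ∈ adm q1, ∃ X2 ∈ adm q2, Y = X1 ∪ X2}
  | .qopt q1 q2 => adm q1 ∪ {Y | ∃ X1 ∈ adm q1, ∃ X2 ∈ adm q2, Y = X1 ∪ X2}

/-- branch(q) -/
def branch : Query V U C R NI → Set (Query V U C R NI)
  | .pat t => {Query.pat t}
  | .select X q => {q' | ∃ b ∈ branch q, q' = Query.select X b}
  | .qunion q1 q2 => branch q1 ∪ branch q2
  | .qjoin q1 q2 => {q' | ∃ b1 ∈ branch q1, ∃ b2 ∈ branch q2, q' = Query.qjoin b1 b2}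
  | .qopt q1 q2 => {q' | ∃ b1 ∈ branch q1, ∃ b2 ∈ branch q2, q' = Query.qopt b1 b2}

/-- Maximal admissible canonical answers mCanAns(q,G,B). -/
def mCanAns (q : Query V U C R NI) (G : Graph U C R) (B : Set U) : Set (SolMap V U) :=
  {ω | ∃ q' ∈ branch q, ω ∈ MaxAdm (RangeRestrict (ans q G ∩ ans q' G) B) (adm q')}

/-- certAns(q,⟨∅,A⟩): certain answers over the KB with empty TBox and ABox A. -/
def certAns (q : Query V U C R NI) (A : Graph U C R) : Set (SolMap V U) :=
  {ω | SolMap.ran ω ⊆ Graph.aDom A ∧ ∀ I : Graph U C R, A ⊆ I → ω ∈ ans q I}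

/-- Entailment regime answers eRAns(q,A) (for the KB with empty TBox). -/
def eRAns : Query V U C R NI → Graph U C R → Set (SolMap V U)
  | .pat t, A => certAns (Query.pat t) A
  | .select X q, A => Proj X (eRAns q A)
  | .qunion q1 q2, A => eRAns q1 A ∪ eRAns q2 A
  | .qjoin q1 q2, A => Join (eRAns q1 A) (eRAns q2 A)
  | .qopt q1 q2, A => Join (eRAns q1 A) (eRAns q2 A) ∪ Diff (eRAns q1 A) (eRAns q2 A)

/-- UNION-free queries. -/
def UnionFree : Query V U C R NI → Prop
  | .pat _ => True
  | .select _ q => UnionFree q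
  | .qunion _ _ => False
  | .qjoin q1 q2 => UnionFree q1 ∧ UnionFree q2
  | .qopt q1 q2 => UnionFree q1 ∧ UnionFree q2

/-- OPT-free queries. -/
def OptFree : Query V U C R NI → Prop
  | .pat _ => True
  | .select _ q => OptFree q
  | .qunion q1 q2 => OptFree q1 ∧ OptFree q2
  | .qjoin q1 q2 => OptFree q1 ∧ OptFree q2
  | .qopt _ _ => False

/-- A conjunction of triple patterns (JOINs of triple patterns). -/
def IsConj : Query V U C R NI → Prop
  | .pat _ => True
  | .qjoin q1 q2 => IsConj q1 ∧ IsConj q2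
  | _ => False

/-- A UCQ in SPARQL syntax with distinguished variables X. -/
def IsUCQ (X : Set V) : Query V U C R NI → Prop
  | .qunion q1 q2 => IsUCQ X q1 ∧ IsUCQ X q2
  | .select Y q => Y = X ∧ X ⊆ Query.vars q ∧ IsConj q
  | _ => False

/-- JO queries: built from triple patterns using only JOIN and OPT. -/
def IsJO : Query V U C R NI → Prop
  | .pat _ => True
  | .qjoin q1 q2 => IsJO q1 ∧ IsJO q2
  | .qopt q1 q2 => IsJO q1 ∧ IsJO q2
  | _ => False

/-- min_⊆(F): the ⊆-minimal elements of F. -/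
def minEls (F : Set (Set V)) : Set (Set V) :=
  {B | B ∈ F ∧ ∀ B' ∈ F, B' ⊆ B → B' = B}

/-- base(q) for JO queries (junk values on SELECT/UNION). -/
def base : Query V U C R NI → Set (Set V)
  | .pat t => {t.vars}
  | .qjoin q1 q2 =>
      {Y | ∃ B1 ∈ minEls (base q1), ∃ B2 ∈ base q2, Y = B1 ∪ B2} ∪
      {Y | ∃ B1 ∈ base q1, ∃ B2 ∈ minEls (base q2), Y = B1 ∪ B2}
  | .qopt q1 q2 => base q1 ∪
      ({Y | ∃ B1 ∈ minEls (base q1), ∃ B2 ∈ base q2, Y = B1 ∪ B2} ∪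
       {Y | ∃ B1 ∈ base q1, ∃ B2 ∈ minEls (base q2), Y = B1 ∪ B2})
  | .select _ _ => ∅
  | .qunion _ _ => ∅

namespace SolMap

theorem dom_restrict (ω : SolMap V U) (X : Set V) : dom (ω.restrict X) = X ∩ dom ω := by
  ext x
  by_cases hx : x ∈ X <;> simp [dom, restrict, hx]

end SolMap

theorem dom_mem_of_mem_maxAdm {Ω : Set (SolMap V U)} {𝒳 : Set (Set V)}
    {ω : SolMap V U} (h : ω ∈ MaxAdm Ω 𝒳) : SolMap.dom ω ∈ 𝒳 := by
  obtain ⟨ω', -, X, hX, hXdom, -, rfl⟩ := h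
  rwa [SolMap.dom_restrict, Set.inter_eq_left.2 hXdom]

theorem adm_subset_of_mem_branch {q q' : Query V U C R NI}
    (h : q' ∈ branch q) : adm q' ⊆ adm q := by
  induction q generalizing q' with
  | pat t =>
    rw [branch, Set.mem_singleton_iff] at h
    rw [h]
  | select X q ih =>
    obtain ⟨b, hb, rfl⟩ := h
    rintro _ ⟨X', hX', rfl⟩
    exact ⟨X', ih hb hX', rfl⟩
  | qunion q1 q2 ih1 ih2 =>
    rcases h with h | h
    · exact (ih1 h).trans Set.subset_union_left
    · exact (ih2 h).trans Set.subset_union_right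
  | qjoin q1 q2 ih1 ih2 =>
    obtain ⟨b1, hb1, b2, hb2, rfl⟩ := h
    rintro _ ⟨X1, hX1, X2, hX2, rfl⟩
    exact ⟨X1, ih1 hb1 hX1, X2, ih2 hb2 hX2, rfl⟩
  | qopt q1 q2 ih1 ih2 =>
    obtain ⟨b1, hb1, b2, hb2, rfl⟩ := h
    rintro _ (hY | ⟨X1, hX1, X2, hX2, rfl⟩)
    · exact Or.inl (ih1 hb1 hY)
    · exact Or.inr ⟨X1, ih1 hb1 hX1, X2, ih2 hb2 hX2, rfl⟩

theorem stmt_6_general {V U C R : Type*} {NI : Set U} (q : Query V U C R NI)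
    (G : Graph U C R) (B : Set U) :
    ∀ ω ∈ mCanAns q G B, SolMap.dom ω ∈ adm q := by
  rintro ω ⟨q', hq', hω⟩
  exact adm_subset_of_mem_branch hq' (dom_mem_of_mem_maxAdm hω)

/-- variable-binding compliance of maximal admissible canonical answers:
every ω ∈ mCanAns(q,G,B) satisfies dom(ω) ∈ adm(q). -/
theorem stmt_6 {V U C R : Type*} {NI : Set U} (q : Query V U C R NI) (hw : q.WF)
    (G : Graph U C R) (B : Set U) :
    ∀ ω ∈ mCanAns q G B, SolMap.dom ω ∈ adm q :=
  stmt_6_general q G B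

end SPARQL
end
end

section
/- For every JO query q: adm(q) = {⋃𝔅 : 𝔅 a nonempty subset of base(q)}; that is, the admissible variable sets of a JO query are exactly the unions of nonempty subfamilies of base(q). -/
open Classical

noncomputable section

/-!
Read `adm q` and `base q` as families in the join-semilattice `Set V`. For a finite family, the
unions of its nonempty subfamilies form its `supClosure`, so it suffices to show
`adm q = supClosure (base q)` by induction on `q`. JOIN acts on `adm` as the pointwise join `⊻`,
and restricting one factor of `base` to its minimal elements is invisible after closing under `⊔`:
if `m₁ ≤ a` and `m₂ ≤ b` are minimal, then `a ⊔ b = (a ⊔ m₂) ⊔ (m₁ ⊔ b)`. For OPT, the extra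
summand `adm q₁` is absorbed, since `adm q₁ ⊻ adm (q₁ JOIN q₂) ⊆ adm (q₁ JOIN q₂)`.
-/

open scoped SetFamily

section SupClosure

variable {α : Type*}

section SemilatticeSup

variable [SemilatticeSup α] {s t M₁ M₂ : Set α} {a c : α}

lemma SupClosed.sups (hs : SupClosed s) (ht : SupClosed t) : SupClosed (s ⊻ t) := by
  rintro _ ⟨a, ha, b, hb, rfl⟩ _ ⟨a', ha', b', hb', rfl⟩
  rw [sup_sup_sup_comm]
  exact Set.sup_mem_sups (hs ha ha') (ht hb hb')

lemma sup_right_mem_of_mem_supClosure {u : Set α} (hu : SupClosed u) (h : ∀ b ∈ s, b ⊔ c ∈ u)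
    (ha : a ∈ supClosure s) : a ⊔ c ∈ u := by
  have hclosed : SupClosed {x | x ⊔ c ∈ u} := fun x hx y hy => by
    rw [Set.mem_ofPred_eq, sup_sup_distrib_right]
    exact hu hx hy
  exact supClosure_min h hclosed ha

lemma supClosure_sups (s t : Set α) : supClosure (s ⊻ t) = supClosure s ⊻ supClosure t := by
  apply subset_antisymm
  · exact supClosure_min (Set.sups_subset subset_supClosure subset_supClosure)
      (supClosed_supClosure.sups supClosed_supClosure)
  · rintro _ ⟨a, ha, b, hb, rfl⟩
    refine sup_right_mem_of_mem_supClosure supClosed_supClosure (fun a' ha' => ?_) ha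
    rw [sup_comm]
    refine sup_right_mem_of_mem_supClosure supClosed_supClosure (fun b' hb' => ?_) hb
    rw [sup_comm]
    exact subset_supClosure (Set.sup_mem_sups ha' hb')

lemma supClosure_union_of_sups_subset (h : supClosure s ⊻ supClosure t ⊆ supClosure t) :
    supClosure (s ∪ t) = supClosure s ∪ supClosure t := by
  apply subset_antisymm
  · refine supClosure_min (Set.union_subset_union subset_supClosure subset_supClosure) ?_
    rintro a (ha | ha) b (hb | hb)
    · exact Or.inl (supClosed_supClosure ha hb)
    · exact Or.inr (h (Set.sup_mem_sups ha hb))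
    · exact Or.inr (sup_comm b a ▸ h (Set.sup_mem_sups hb ha))
    · exact Or.inr (supClosed_supClosure ha hb)
  · exact Set.union_subset (supClosure_mono Set.subset_union_left)
      (supClosure_mono Set.subset_union_right)

lemma supClosure_sups_union_sups (hM₁ : M₁ ⊆ s) (hM₂ : M₂ ⊆ t) (hs : s ⊆ upperClosure M₁)
    (ht : t ⊆ upperClosure M₂) :
    supClosure (M₁ ⊻ t ∪ s ⊻ M₂) = supClosure s ⊻ supClosure t := by
  apply subset_antisymm
  · rw [← supClosure_sups]
    exact supClosure_mono
      (Set.union_subset (Set.sups_subset_right hM₁) (Set.sups_subset_left hM₂))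
  · rintro _ ⟨a, ha, b, hb, rfl⟩
    obtain ⟨m₁, hm₁, hm₁a⟩ := supClosure_min hs (upperClosure M₁).upper.supClosed ha
    obtain ⟨m₂, hm₂, hm₂b⟩ := supClosure_min ht (upperClosure M₂).upper.supClosed hb
    have hleft : a ⊔ m₂ ∈ supClosure (M₁ ⊻ t ∪ s ⊻ M₂) := by
      refine supClosure_mono Set.subset_union_right ?_
      rw [supClosure_sups]
      exact Set.sup_mem_sups ha (subset_supClosure hm₂)
    have hright : m₁ ⊔ b ∈ supClosure (M₁ ⊻ t ∪ s ⊻ M₂) := by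
      refine supClosure_mono Set.subset_union_left ?_
      rw [supClosure_sups]
      exact Set.sup_mem_sups (subset_supClosure hm₁) hb
    have hsplit : a ⊔ b = (a ⊔ m₂) ⊔ (m₁ ⊔ b) := by
      rw [sup_sup_sup_comm, sup_eq_left.2 hm₁a, sup_eq_right.2 hm₂b]
    change a ⊔ b ∈ _
    rw [hsplit]
    exact supClosed_supClosure hleft hright

end SemilatticeSup

lemma Set.Finite.supClosure_eq [CompleteLattice α] {s : Set α} (hs : s.Finite) :
    supClosure s = {a | ∃ t ⊆ s, t.Nonempty ∧ a = sSup t} := by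
  apply subset_antisymm
  · have hgen : s ⊆ {a | ∃ t ⊆ s, t.Nonempty ∧ a = sSup t} := fun a ha =>
      ⟨{a}, Set.singleton_subset_iff.2 ha, Set.singleton_nonempty a, sSup_singleton.symm⟩
    refine supClosure_min hgen ?_
    rintro _ ⟨t, hts, ht, rfl⟩ _ ⟨t', hts', -, rfl⟩
    exact ⟨t ∪ t', Set.union_subset hts hts', ht.mono Set.subset_union_left, sSup_union.symm⟩
  · rintro _ ⟨t, hts, ht, rfl⟩
    exact supClosed_supClosure.sSup_mem_of_nonempty (hs.subset hts) ht
      (hts.trans subset_supClosure)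

end SupClosure

namespace SPARQL

variable {V U C R : Type*} {NI : Set U}

lemma minEls_subset (F : Set (Set V)) : minEls F ⊆ F := fun _ h => h.1

lemma subset_upperClosure_minEls {F : Set (Set V)} (hF : F.Finite) :
    F ⊆ upperClosure (minEls F) := by
  intro B hB
  obtain ⟨m, hmB, hm⟩ := hF.isPWO.exists_le_minimal hB
  exact ⟨m, ⟨hm.1, fun B' hB' h => h.antisymm (hm.2 hB' h)⟩, hmB⟩

lemma adm_qjoin (q₁ q₂ : Query V U C R NI) : adm (.qjoin q₁ q₂) = adm q₁ ⊻ adm q₂ := by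
  ext Y
  simp only [adm, Set.mem_ofPred_eq, Set.mem_sups, Set.sup_eq_union, eq_comm]

lemma base_qjoin (q₁ q₂ : Query V U C R NI) :
    base (.qjoin q₁ q₂) = minEls (base q₁) ⊻ base q₂ ∪ base q₁ ⊻ minEls (base q₂) := by
  ext Y
  simp only [base, Set.mem_union, Set.mem_ofPred_eq, Set.mem_sups, Set.sup_eq_union, eq_comm]

lemma base_qjoin_finite {q₁ q₂ : Query V U C R NI} (h₁ : (base q₁).Finite)
    (h₂ : (base q₂).Finite) : (base (.qjoin q₁ q₂)).Finite := by
  rw [base_qjoin]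
  exact ((h₁.subset (minEls_subset _)).image2 _ h₂).union
    (h₁.image2 _ (h₂.subset (minEls_subset _)))

lemma base_finite {q : Query V U C R NI} (hq : IsJO q) : (base q).Finite := by
  induction q with
  | pat _ => exact Set.finite_singleton _
  | select | qunion => exact hq.elim
  | qjoin q₁ q₂ ih₁ ih₂ => exact base_qjoin_finite (ih₁ hq.1) (ih₂ hq.2)
  | qopt q₁ q₂ ih₁ ih₂ => exact (ih₁ hq.1).union (base_qjoin_finite (ih₁ hq.1) (ih₂ hq.2))

lemma supClosure_base_qjoin {q₁ q₂ : Query V U C R NI} (h₁ : (base q₁).Finite)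
    (h₂ : (base q₂).Finite) :
    supClosure (base (.qjoin q₁ q₂)) = supClosure (base q₁) ⊻ supClosure (base q₂) := by
  rw [base_qjoin]
  exact supClosure_sups_union_sups (minEls_subset _) (minEls_subset _)
    (subset_upperClosure_minEls h₁) (subset_upperClosure_minEls h₂)

lemma adm_eq_supClosure_base {q : Query V U C R NI} (hq : IsJO q) :
    adm q = supClosure (base q) := by
  induction q with
  | pat _ => exact supClosure_singleton.symm
  | select | qunion => exact hq.elim
  | qjoin q₁ q₂ ih₁ ih₂ =>
      rw [adm_qjoin, ih₁ hq.1, ih₂ hq.2,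
        supClosure_base_qjoin (base_finite hq.1) (base_finite hq.2)]
  | qopt q₁ q₂ ih₁ ih₂ =>
      have hjoin : supClosure (base (.qjoin q₁ q₂)) =
          supClosure (base q₁) ⊻ supClosure (base q₂) :=
        supClosure_base_qjoin (base_finite hq.1) (base_finite hq.2)
      have habsorb : supClosure (base q₁) ⊻ supClosure (base (.qjoin q₁ q₂)) ⊆
          supClosure (base (.qjoin q₁ q₂)) := by
        rw [hjoin, ← Set.sups_assoc]
        exact Set.sups_subset_right (Set.sups_subset_self.2 supClosed_supClosure)
      change adm q₁ ∪ adm (.qjoin q₁ q₂) = supClosure (base q₁ ∪ base (.qjoin q₁ q₂))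
      rw [supClosure_union_of_sups_subset habsorb, hjoin, adm_qjoin, ih₁ hq.1, ih₂ hq.2]

/-- for a JO query q, adm(q) consists exactly of the unions of nonempty
subfamilies of base(q). -/
theorem stmt_17 {V U C R : Type*} {NI : Set U} (q : Query V U C R NI) (hq : IsJO q) :
    adm q = {Y | ∃ 𝔅 : Set (Set V), 𝔅 ⊆ base q ∧ 𝔅.Nonempty ∧ Y = ⋃₀ 𝔅} := by
  rw [adm_eq_supClosure_base hq, (base_finite hq).supClosure_eq]
  simp only [Set.sSup_eq_sUnion]

end SPARQL
end
end
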